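/- arXiv:2203.16070 — 9 statements merged into one kernel-verified Lean document; each statement's English description precedes it below -/
import Mathlib

section
/- Suppose y2 − y1 ≤ √2·L. Then the midpoint x* = (y1 + y2)/2 is a global maximizer of f over the real line: for every x ∈ ℝ, f(x) ≤ f(x*). -/
/-- If the two prediction locations are within `√2 · L` of each other, the
midpoint `x* = (y1 + y2)/2` is a global maximizer of the variance-reduction
objective `f`. -/
theorem midpoint_global_max_of_close
    (y1 y2 L σ0 σ : ℝ) (hy : y1 < y2) (hL : 0 < L) (hσ0 : 0 < σ0) (hσ : 0 < σ)
    (f : ℝ → ℝ)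
    (hf : ∀ x, f x = (σ0 ^ 4 / (σ0 ^ 2 + σ ^ 2)) *
      (Real.exp (-(x - y1) ^ 2 / L ^ 2) + Real.exp (-(x - y2) ^ 2 / L ^ 2)))
    (hdist : y2 - y1 ≤ Real.sqrt 2 * L) :
    ∀ x : ℝ, f x ≤ f ((y1 + y2) / 2) := by
  intro x
  have hc : 0 ≤ σ0 ^ 4 / (σ0 ^ 2 + σ ^ 2) := by positivity
  rw [hf, hf]
  apply mul_le_mul_of_nonneg_left _ hc
  set d := (y2 - y1) / 2 with hd
  set u := x - (y1 + y2) / 2 with hu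
  have h1 : x - y1 = u + d := by rw [hu, hd]; ring
  have h2 : x - y2 = u - d := by rw [hu, hd]; ring
  have h3 : (y1 + y2) / 2 - y1 = d := by rw [hd]; ring
  have h4 : (y1 + y2) / 2 - y2 = -d := by rw [hd]; ring
  rw [h1, h2, h3, h4, neg_sq]
  have hL2 : (0:ℝ) < L ^ 2 := by positivity
  have hd0 : 0 ≤ d := by rw [hd]; linarith
  have hdsq : 2 * d ^ 2 ≤ L ^ 2 := by
    have hdle : d ≤ Real.sqrt 2 * L / 2 := by rw [hd]; linarith
    nlinarith [Real.sq_sqrt (show (0:ℝ) ≤ 2 by norm_num),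
      Real.sqrt_nonneg 2, mul_self_le_mul_self hd0 hdle]
  have e1 : -(u + d) ^ 2 / L ^ 2 = (-(u^2 + d^2) / L^2) + (-(2*u*d/L^2)) := by
    field_simp; ring
  have e2 : -(u - d) ^ 2 / L ^ 2 = (-(u^2 + d^2) / L^2) + (2*u*d/L^2) := by
    field_simp; ring
  rw [e1, e2, Real.exp_add, Real.exp_add, ← mul_add]
  have hcosh : Real.exp (-(2*u*d/L^2)) + Real.exp (2*u*d/L^2)
      = 2 * Real.cosh (2*u*d/L^2) := by rw [Real.cosh_eq]; ring
  rw [hcosh]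
  have h5 : Real.cosh (2*u*d/L^2) ≤ Real.exp ((2*u*d/L^2)^2/2) :=
    Real.cosh_le_exp_half_sq _
  calc Real.exp (-(u^2+d^2)/L^2) * (2 * Real.cosh (2*u*d/L^2))
      ≤ Real.exp (-(u^2+d^2)/L^2) * (2 * Real.exp ((2*u*d/L^2)^2/2)) := by
        have := Real.exp_pos (-(u^2+d^2)/L^2)
        nlinarith
    _ = 2 * Real.exp (-(u^2+d^2)/L^2 + (2*u*d/L^2)^2/2) := by
        rw [Real.exp_add]; ring
    _ ≤ Real.exp (-d ^ 2 / L ^ 2) + Real.exp (-d ^ 2 / L ^ 2) := by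
        rw [← two_mul]
        have harg : -(u^2+d^2)/L^2 + (2*u*d/L^2)^2/2 ≤ -d ^ 2 / L ^ 2 := by
          rw [← sub_nonneg]
          have heq : -d ^ 2 / L ^ 2 - (-(u^2+d^2)/L^2 + (2*u*d/L^2)^2/2)
              = u^2 * (L^2 - 2*d^2) / L^4 := by field_simp; ring
          rw [heq]
          have : 0 ≤ L^2 - 2*d^2 := by linarith
          positivity
        gcongr
end

section
/- Suppose y2 − y1 > √2·L. Then the midpoint x* = (y1 + y2)/2 is a strict local minimum of f: there exists δ > 0 such that for every x with 0 < |x − x*| < δ one has f(x) > f(x*). In particular, x* is not a global maximizer of f. -/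
private lemma cosh_gt (w : ℝ) (hw : w ≠ 0) :
    Real.exp w + Real.exp (-w) > 2 + w ^ 2 := by
  have h1 : Real.exp w + Real.exp (-w) = 2 * Real.cosh w := by
    rw [Real.cosh_eq]; ring
  have h2 : Real.cosh w = 1 + 2 * Real.sinh (w / 2) ^ 2 := by
    have h := Real.cosh_two_mul (w / 2)
    have hsq := Real.cosh_sq (w / 2)
    rw [show 2 * (w / 2) = w by ring] at h
    nlinarith [h, hsq]
  have h3 : Real.sinh (w / 2) ^ 2 > (w / 2) ^ 2 := by
    rcases lt_or_gt_of_ne hw with h | h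
    · have : Real.sinh (w / 2) < w / 2 := Real.sinh_lt_self_iff.2 (by linarith)
      nlinarith
    · have : w / 2 < Real.sinh (w / 2) := Real.self_lt_sinh_iff.2 (by linarith)
      nlinarith
  nlinarith [h1, h2, h3]

private lemma key_ineq (L a t : ℝ) (hL : 0 < L) (ha : 0 < a)
    (hk : L ^ 2 < 2 * a ^ 2) (ht : t ≠ 0)
    (ht2 : 2 * a ^ 2 * t ^ 2 ≤ L ^ 2 * (2 * a ^ 2 - L ^ 2)) :
    2 * Real.exp (-a ^ 2 / L ^ 2) <
      Real.exp (-(t + a) ^ 2 / L ^ 2) + Real.exp (-(t - a) ^ 2 / L ^ 2) := by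
  have hL2 : (0:ℝ) < L ^ 2 := by positivity
  have ht0 : 0 < t ^ 2 := by positivity
  set s : ℝ := t ^ 2 / L ^ 2 with hs
  set w : ℝ := 2 * a * t / L ^ 2 with hw
  have e1 : -(t + a) ^ 2 / L ^ 2 = -a ^ 2 / L ^ 2 + (-s + -w) := by
    rw [hs, hw]; field_simp; ring
  have e2 : -(t - a) ^ 2 / L ^ 2 = -a ^ 2 / L ^ 2 + (-s + w) := by
    rw [hs, hw]; field_simp; ring
  have hwne : w ≠ 0 := by
    rw [hw]
    exact div_ne_zero (mul_ne_zero (by positivity) ht) hL2.ne'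
  have hcosh := cosh_gt w hwne
  have hexp_s : 1 - s ≤ Real.exp (-s) := by
    have := Real.add_one_le_exp (-s); linarith
  have htL : t ^ 2 < L ^ 2 := by nlinarith
  have hspos : 0 ≤ s := by positivity
  have hs1 : s < 1 := by rw [hs, div_lt_one hL2]; exact htL
  have hws : 2 * s ≤ w ^ 2 * (1 - s) := by
    rw [← sub_nonneg]
    have heq : w ^ 2 * (1 - s) - 2 * s
        = 2 * t ^ 2 * (L ^ 2 * (2 * a ^ 2 - L ^ 2) - 2 * a ^ 2 * t ^ 2) / L ^ 6 := by
      rw [hs, hw]; field_simp; ring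
    rw [heq]
    apply div_nonneg _ (by positivity)
    nlinarith
  have hprod : 2 < Real.exp (-s) * (Real.exp w + Real.exp (-w)) := by
    have h1 : (1 - s) * (Real.exp w + Real.exp (-w)) ≤
        Real.exp (-s) * (Real.exp w + Real.exp (-w)) := by
      apply mul_le_mul_of_nonneg_right hexp_s
      positivity
    have h2 : (1 - s) * (2 + w ^ 2) < (1 - s) * (Real.exp w + Real.exp (-w)) :=
      mul_lt_mul_of_pos_left hcosh (by linarith)
    nlinarith [h1, h2, hws]
  rw [e1, e2, Real.exp_add, Real.exp_add, Real.exp_add, Real.exp_add]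
  have hE := Real.exp_pos (-a ^ 2 / L ^ 2)
  nlinarith [hprod, hE]

/-- If the two prediction locations are more than `√2 · L` apart, the midpoint
`x* = (y1 + y2)/2` is a strict local minimum of the variance-reduction
objective `f`; in particular it is not a global maximizer. -/
theorem midpoint_strict_local_min_of_far
    (y1 y2 L σ0 σ : ℝ) (hy : y1 < y2) (hL : 0 < L) (hσ0 : 0 < σ0) (hσ : 0 < σ)
    (f : ℝ → ℝ)
    (hf : ∀ x, f x = (σ0 ^ 4 / (σ0 ^ 2 + σ ^ 2)) *
      (Real.exp (-(x - y1) ^ 2 / L ^ 2) + Real.exp (-(x - y2) ^ 2 / L ^ 2)))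
    (hdist : y2 - y1 > Real.sqrt 2 * L) :
    (∃ δ > 0, ∀ x : ℝ, 0 < |x - (y1 + y2) / 2| → |x - (y1 + y2) / 2| < δ →
      f ((y1 + y2) / 2) < f x) ∧
    ¬ (∀ x : ℝ, f x ≤ f ((y1 + y2) / 2)) := by
  have hm : ((y1 + y2) / 2 : ℝ) = (y1 + y2) / 2 := rfl
  set m : ℝ := (y1 + y2) / 2 with hmdef
  have ha0 : 0 < (y2 - y1) / 2 := by linarith
  set a : ℝ := (y2 - y1) / 2 with hadef
  have hsq2 : (y2 - y1) ^ 2 > 2 * L ^ 2 := by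
    have h2 : (Real.sqrt 2 * L) ^ 2 = 2 * L ^ 2 := by
      rw [mul_pow, Real.sq_sqrt (by norm_num : (0:ℝ) ≤ 2)]
    have hpos : 0 ≤ Real.sqrt 2 * L := by positivity
    nlinarith [hdist, hpos]
  have hkey : L ^ 2 < 2 * a ^ 2 := by rw [hadef]; nlinarith
  have hC : 0 < σ0 ^ 4 / (σ0 ^ 2 + σ ^ 2) := by positivity
  set δ : ℝ := L * Real.sqrt ((2 * a ^ 2 - L ^ 2) / (2 * a ^ 2)) with hδ
  have hfrac : 0 < (2 * a ^ 2 - L ^ 2) / (2 * a ^ 2) := by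
    apply div_pos (by linarith) (by positivity)
  have hδpos : 0 < δ := mul_pos hL (Real.sqrt_pos.2 hfrac)
  have hδsq : δ ^ 2 = L ^ 2 * ((2 * a ^ 2 - L ^ 2) / (2 * a ^ 2)) := by
    rw [hδ, mul_pow, Real.sq_sqrt hfrac.le]
  have hδsq' : δ ^ 2 * (2 * a ^ 2) = L ^ 2 * (2 * a ^ 2 - L ^ 2) := by
    rw [hδsq]; field_simp
  have part1 : ∀ x : ℝ, 0 < |x - m| → |x - m| < δ → f m < f x := by
    intro x hx1 hx2
    have ht : x - m ≠ 0 := fun h => by rw [h] at hx1; simp at hx1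
    have ht2 : (x - m) ^ 2 < δ ^ 2 := by
      nlinarith [sq_abs (x - m), abs_nonneg (x - m), hx2]
    have hmain := key_ineq L a (x - m) hL ha0 hkey ht
      (by nlinarith [ht2, ha0])
    rw [hf x, hf m]
    have h1 : x - y1 = (x - m) + a := by rw [hmdef, hadef]; ring
    have h2 : x - y2 = (x - m) - a := by rw [hmdef, hadef]; ring
    have h3 : m - y1 = a := by rw [hmdef, hadef]; ring
    have h4 : m - y2 = -a := by rw [hmdef, hadef]; ring
    rw [h1, h2, h3, h4]
    have h5 : -(-a) ^ 2 / L ^ 2 = -a ^ 2 / L ^ 2 := by ring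
    rw [h5]
    have h6 : Real.exp (-a ^ 2 / L ^ 2) + Real.exp (-a ^ 2 / L ^ 2)
        = 2 * Real.exp (-a ^ 2 / L ^ 2) := by ring
    rw [h6]
    exact mul_lt_mul_of_pos_left hmain hC
  refine ⟨⟨δ, hδpos, part1⟩, ?_⟩
  intro hglob
  have heq : m + δ / 2 - m = δ / 2 := by ring
  have h1 : 0 < |m + δ / 2 - m| := by
    rw [heq, abs_of_pos (by linarith)]; linarith
  have h2 : |m + δ / 2 - m| < δ := by
    rw [heq, abs_of_pos (by linarith)]; linarith
  exact absurd (hglob (m + δ / 2)) (not_le.2 (part1 _ h1 h2))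
end

section
/- The midpoint x* = (y1 + y2)/2 is a global maximizer of f over ℝ (i.e., f(x) ≤ f(x*) for all x ∈ ℝ) if and only if y2 − y1 ≤ √2·L. -/
/-!
Put `x = m + u` with `m` the midpoint and `a = (y2 - y1) / 2`. The two Gaussians combine to
`2 exp (-a²/L²) · cosh (2a u/L²) / exp (u²/L²)`, so `m` is a global maximizer iff
`cosh (k u) ≤ exp (u²/L²)` for all `u`, where `k = 2a/L²`. The bound `cosh x ≤ exp (x²/2)` gives this
when `k² ≤ 2/L²`; conversely, for `c < 1/2` the second-order growth `cosh x ≥ 1 + x²/2` beats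
`exp (c x²)` at a suitable `x`.
-/

open Real

lemma Real.one_add_sq_div_two_le_cosh (x : ℝ) : 1 + x ^ 2 / 2 ≤ cosh x := by
  have h := sum_le_hasSum (Finset.range 2) (fun n _ ↦ by rw [pow_mul]; positivity) (hasSum_cosh x)
  simpa [Finset.sum_range_succ] using h

lemma Real.forall_cosh_le_exp_mul_sq_iff (c : ℝ) :
    (∀ x, cosh x ≤ exp (c * x ^ 2)) ↔ 1 / 2 ≤ c := by
  refine ⟨fun h ↦ ?_, fun hc x ↦ ?_⟩
  · by_contra! hc
    rcases le_or_gt c 0 with hc0 | hc0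
    · have h1 : exp (c * 1 ^ 2) ≤ 1 := exp_le_one_iff.2 (by linarith)
      linarith [h 1, one_lt_cosh.2 one_ne_zero]
    -- at `x ^ 2 = (1 - 2c)/c` the bounds `1 + x²/2 ≤ cosh x` and `exp s < 1/(1 - s)` meet at `1/(2c)`
    set x := √((1 - 2 * c) / c)
    have hx : x ^ 2 = (1 - 2 * c) / c := sq_sqrt (by apply div_nonneg <;> linarith)
    have hexp : exp (c * x ^ 2) < 1 / (2 * c) := by
      have h := exp_bound_div_one_sub_of_interval' (x := 1 - 2 * c) (by linarith) (by linarith)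
      rwa [sub_sub_cancel, ← mul_div_cancel₀ (1 - 2 * c) hc0.ne', ← hx] at h
    have hcosh : 1 / (2 * c) ≤ cosh x := by
      convert one_add_sq_div_two_le_cosh x using 1
      rw [hx]; field_simp; ring
    linarith [h x]
  · calc cosh x ≤ exp (x ^ 2 / 2) := cosh_le_exp_half_sq x
      _ ≤ exp (c * x ^ 2) := exp_le_exp.2 (by nlinarith [sq_nonneg x])

lemma Real.forall_cosh_mul_le_exp_mul_sq_iff {k : ℝ} (hk : k ≠ 0) (c : ℝ) :
    (∀ u, cosh (k * u) ≤ exp (c * u ^ 2)) ↔ k ^ 2 ≤ 2 * c := by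
  have hk2 : 0 < k ^ 2 := by positivity
  calc (∀ u, cosh (k * u) ≤ exp (c * u ^ 2)) ↔ ∀ x, cosh x ≤ exp (c / k ^ 2 * x ^ 2) := by
        refine ⟨fun h x ↦ ?_, fun h u ↦ ?_⟩
        · convert h (x / k) using 2 <;> field_simp
        · convert h (k * u) using 2; field_simp
    _ ↔ k ^ 2 ≤ 2 * c := by
        rw [forall_cosh_le_exp_mul_sq_iff, le_div_iff₀ hk2]; constructor <;> intro <;> linarith

lemma Real.exp_neg_sq_div_add_exp_neg_sq_div (u a s : ℝ) :
    exp (-(u + a) ^ 2 / s) + exp (-(u - a) ^ 2 / s) =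
      2 * exp (-a ^ 2 / s) * (cosh (2 * a / s * u) / exp (1 / s * u ^ 2)) := by
  calc exp (-(u + a) ^ 2 / s) + exp (-(u - a) ^ 2 / s)
      = exp (-a ^ 2 / s + -(1 / s * u ^ 2) + -(2 * a / s * u)) +
          exp (-a ^ 2 / s + -(1 / s * u ^ 2) + 2 * a / s * u) := by ring_nf
    _ = _ := by
      rw [cosh_eq, div_eq_mul_inv _ (exp _), ← exp_neg]
      simp only [exp_add]
      ring

theorem midpoint_global_max_iff_general
    (y1 y2 L σ0 σ : ℝ) (hy : y1 < y2) (hL : 0 < L) (hσ0 : 0 < σ0)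
    (f : ℝ → ℝ)
    (hf : ∀ x, f x = (σ0 ^ 4 / (σ0 ^ 2 + σ ^ 2)) *
      (Real.exp (-(x - y1) ^ 2 / L ^ 2) + Real.exp (-(x - y2) ^ 2 / L ^ 2))) :
    (∀ x : ℝ, f x ≤ f ((y1 + y2) / 2)) ↔ y2 - y1 ≤ Real.sqrt 2 * L := by
  set m := (y1 + y2) / 2 with hm
  set a := (y2 - y1) / 2 with ha
  have hf_shift (u : ℝ) : f (m + u) = σ0 ^ 4 / (σ0 ^ 2 + σ ^ 2) * (2 * exp (-a ^ 2 / L ^ 2)) *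
      (cosh (2 * a / L ^ 2 * u) / exp (1 / L ^ 2 * u ^ 2)) := by
    rw [hf, show m + u - y1 = u + a by linarith, show m + u - y2 = u - a by linarith,
      exp_neg_sq_div_add_exp_neg_sq_div]
    ring
  have hf_mid : f m = σ0 ^ 4 / (σ0 ^ 2 + σ ^ 2) * (2 * exp (-a ^ 2 / L ^ 2)) := by
    simpa using hf_shift 0
  have hscale : 0 < σ0 ^ 4 / (σ0 ^ 2 + σ ^ 2) * (2 * exp (-a ^ 2 / L ^ 2)) := by positivity
  calc (∀ x, f x ≤ f m) ↔ ∀ u, cosh (2 * a / L ^ 2 * u) ≤ exp (1 / L ^ 2 * u ^ 2) := by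
        simp_rw [← div_le_one (exp_pos _), ← mul_le_iff_le_one_right hscale, ← hf_shift, ← hf_mid]
        exact ⟨fun h u ↦ h _, fun h x ↦ by simpa using h (x - m)⟩
    _ ↔ (y2 - y1) ^ 2 ≤ (√2 * L) ^ 2 := by
        rw [forall_cosh_mul_le_exp_mul_sq_iff (by positivity), mul_pow, sq_sqrt zero_le_two,
          div_pow, mul_one_div, div_le_div_iff₀ (by positivity) (by positivity),
          show 2 * a = y2 - y1 by linarith, show 2 * (L ^ 2) ^ 2 = 2 * L ^ 2 * L ^ 2 by ring]
        exact mul_le_mul_iff_left₀ (by positivity)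
    _ ↔ y2 - y1 ≤ √2 * L := sq_le_sq₀ (by linarith) (by positivity)

/-- The midpoint `x* = (y1 + y2)/2` is a global maximizer of the
variance-reduction objective `f` if and only if `y2 - y1 ≤ √2 · L`. -/
theorem midpoint_global_max_iff
    (y1 y2 L σ0 σ : ℝ) (hy : y1 < y2) (hL : 0 < L) (hσ0 : 0 < σ0) (hσ : 0 < σ)
    (f : ℝ → ℝ)
    (hf : ∀ x, f x = (σ0 ^ 4 / (σ0 ^ 2 + σ ^ 2)) *
      (Real.exp (-(x - y1) ^ 2 / L ^ 2) + Real.exp (-(x - y2) ^ 2 / L ^ 2))) :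
    (∀ x : ℝ, f x ≤ f ((y1 + y2) / 2)) ↔ y2 - y1 ≤ Real.sqrt 2 * L :=
  midpoint_global_max_iff_general y1 y2 L σ0 σ hy hL hσ0 f hf
end

section
/- The second derivative of f at the midpoint x* = (y1 + y2)/2 equals (−4/L²)·(σ0⁴/(σ0² + σ²))·exp(−(y2 − y1)²/(4L²))·(1 − (y2 − y1)²/(2L²)). Consequently, f''(x*) < 0 when (y2 − y1)² < 2L² and f''(x*) > 0 when (y2 − y1)² > 2L². -/
/-! Each Gaussian bump `g_y x = exp (-(x - y)² / L²)` has `g_y'' = (2/L²) (2 (x - y)²/L² - 1) g_y`.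
At the midpoint both bumps sit at distance `(y₂ - y₁)/2`, so they contribute equally and the sign
of `f''(x*)` is that of `(y₂ - y₁)²/(2L²) - 1`. -/

open Real

theorem deriv_deriv_const_mul_add {𝕜 : Type*} [NontriviallyNormedField 𝕜] {g h : 𝕜 → 𝕜}
    (c x : 𝕜) (hg : Differentiable 𝕜 g) (hh : Differentiable 𝕜 h)
    (hg' : DifferentiableAt 𝕜 (deriv g) x) (hh' : DifferentiableAt 𝕜 (deriv h) x) :
    deriv (deriv fun y => c * (g y + h y)) x = c * (deriv (deriv g) x + deriv (deriv h) x) := by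
  have hderiv : deriv (fun y => c * (g y + h y)) = fun y => c * (deriv g y + deriv h y) :=
    funext fun y => (((hg y).hasDerivAt.add (hh y).hasDerivAt).const_mul c).deriv
  rw [hderiv]
  exact ((hg'.hasDerivAt.add hh'.hasDerivAt).const_mul c).deriv

noncomputable def gaussBump (L y x : ℝ) : ℝ := exp (-(x - y) ^ 2 / L ^ 2)

theorem hasDerivAt_gaussBump (L y x : ℝ) :
    HasDerivAt (gaussBump L y) (-2 * (x - y) / L ^ 2 * gaussBump L y x) x := by
  have hshift : HasDerivAt (fun x : ℝ => x - y) 1 x := (hasDerivAt_id' x).sub_const y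
  have hexponent : HasDerivAt (fun x => -(x - y) ^ 2 / L ^ 2) (-2 * (x - y) / L ^ 2) x :=
    ((hshift.pow 2).neg.div_const (L ^ 2)).congr_deriv (by ring)
  exact hexponent.exp.congr_deriv (mul_comm _ _)

theorem differentiable_gaussBump (L y : ℝ) : Differentiable ℝ (gaussBump L y) :=
  fun x => (hasDerivAt_gaussBump L y x).differentiableAt

theorem deriv_gaussBump (L y : ℝ) :
    deriv (gaussBump L y) = fun x => -2 * (x - y) / L ^ 2 * gaussBump L y x :=
  funext fun x => (hasDerivAt_gaussBump L y x).deriv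

theorem hasDerivAt_deriv_gaussBump (L y x : ℝ) :
    HasDerivAt (deriv (gaussBump L y))
      (2 / L ^ 2 * (2 * (x - y) ^ 2 / L ^ 2 - 1) * gaussBump L y x) x := by
  have hslope : HasDerivAt (fun x : ℝ => -2 * (x - y) / L ^ 2) (-2 / L ^ 2) x :=
    ((((hasDerivAt_id' x).sub_const y).const_mul (-2 : ℝ)).div_const (L ^ 2)).congr_deriv
      (by ring)
  rw [deriv_gaussBump]
  exact (hslope.mul (hasDerivAt_gaussBump L y x)).congr_deriv (by ring)

theorem deriv_deriv_gaussBump_add_at_midpoint (L y₁ y₂ : ℝ) :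
    deriv (deriv (gaussBump L y₁)) ((y₁ + y₂) / 2) +
        deriv (deriv (gaussBump L y₂)) ((y₁ + y₂) / 2) =
      -4 / L ^ 2 * exp (-(y₂ - y₁) ^ 2 / (4 * L ^ 2)) * (1 - (y₂ - y₁) ^ 2 / (2 * L ^ 2)) := by
  rw [(hasDerivAt_deriv_gaussBump L y₁ _).deriv, (hasDerivAt_deriv_gaussBump L y₂ _).deriv]
  have h₁ : -((y₁ + y₂) / 2 - y₁) ^ 2 / L ^ 2 = -(y₂ - y₁) ^ 2 / (4 * L ^ 2) := by ring
  have h₂ : -((y₁ + y₂) / 2 - y₂) ^ 2 / L ^ 2 = -(y₂ - y₁) ^ 2 / (4 * L ^ 2) := by ring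
  simp only [gaussBump, h₁, h₂]
  ring

theorem second_deriv_at_midpoint_general
    (y1 y2 L σ0 σ : ℝ) (hL : 0 < L) (hσ0 : 0 < σ0)
    (f : ℝ → ℝ)
    (hf : ∀ x, f x = (σ0 ^ 4 / (σ0 ^ 2 + σ ^ 2)) *
      (Real.exp (-(x - y1) ^ 2 / L ^ 2) + Real.exp (-(x - y2) ^ 2 / L ^ 2))) :
    deriv (deriv f) ((y1 + y2) / 2) =
      (-4 / L ^ 2) * (σ0 ^ 4 / (σ0 ^ 2 + σ ^ 2)) *
        Real.exp (-(y2 - y1) ^ 2 / (4 * L ^ 2)) * (1 - (y2 - y1) ^ 2 / (2 * L ^ 2)) ∧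
    ((y2 - y1) ^ 2 < 2 * L ^ 2 → deriv (deriv f) ((y1 + y2) / 2) < 0) ∧
    ((y2 - y1) ^ 2 > 2 * L ^ 2 → deriv (deriv f) ((y1 + y2) / 2) > 0) := by
  set c := σ0 ^ 4 / (σ0 ^ 2 + σ ^ 2)
  have hf' : f = fun x => c * (gaussBump L y1 x + gaussBump L y2 x) := funext hf
  have hmain : deriv (deriv f) ((y1 + y2) / 2) =
      -4 / L ^ 2 * c * exp (-(y2 - y1) ^ 2 / (4 * L ^ 2)) * (1 - (y2 - y1) ^ 2 / (2 * L ^ 2)) := by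
    rw [hf', deriv_deriv_const_mul_add _ _ (differentiable_gaussBump L y1)
      (differentiable_gaussBump L y2)
      (hasDerivAt_deriv_gaussBump L y1 _).differentiableAt
      (hasDerivAt_deriv_gaussBump L y2 _).differentiableAt,
      deriv_deriv_gaussBump_add_at_midpoint]
    ring
  have hK : -4 / L ^ 2 * c * exp (-(y2 - y1) ^ 2 / (4 * L ^ 2)) < 0 := by
    rw [neg_div, neg_mul, neg_mul, neg_lt_zero]
    positivity
  refine ⟨hmain, fun h => ?_, fun h => ?_⟩ <;> rw [hmain]
  · refine mul_neg_of_neg_of_pos hK ?_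
    rw [sub_pos, div_lt_one (by positivity)]
    exact h
  · refine mul_pos_of_neg_of_neg hK ?_
    rw [sub_neg, one_lt_div (by positivity)]
    exact h

/-- The second derivative of the variance-reduction objective `f` at the
midpoint `x* = (y1 + y2)/2` equals
`(-4/L²)·(σ0⁴/(σ0² + σ²))·exp(-(y2 - y1)²/(4L²))·(1 - (y2 - y1)²/(2L²))`;
consequently it is negative when `(y2 - y1)² < 2L²` and positive when
`(y2 - y1)² > 2L²`. -/
theorem second_deriv_at_midpoint
    (y1 y2 L σ0 σ : ℝ) (hy : y1 < y2) (hL : 0 < L) (hσ0 : 0 < σ0) (hσ : 0 < σ)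
    (f : ℝ → ℝ)
    (hf : ∀ x, f x = (σ0 ^ 4 / (σ0 ^ 2 + σ ^ 2)) *
      (Real.exp (-(x - y1) ^ 2 / L ^ 2) + Real.exp (-(x - y2) ^ 2 / L ^ 2))) :
    deriv (deriv f) ((y1 + y2) / 2) =
      (-4 / L ^ 2) * (σ0 ^ 4 / (σ0 ^ 2 + σ ^ 2)) *
        Real.exp (-(y2 - y1) ^ 2 / (4 * L ^ 2)) * (1 - (y2 - y1) ^ 2 / (2 * L ^ 2)) ∧
    ((y2 - y1) ^ 2 < 2 * L ^ 2 → deriv (deriv f) ((y1 + y2) / 2) < 0) ∧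
    ((y2 - y1) ^ 2 > 2 * L ^ 2 → deriv (deriv f) ((y1 + y2) / 2) > 0) :=
  second_deriv_at_midpoint_general y1 y2 L σ0 σ hL hσ0 f hf
end

section
/- Suppose y2 − y1 ≤ √2·L. Then f is monotone nondecreasing on the interval [y1, x*] and monotone nonincreasing on the interval [x*, y2], where x* = (y1 + y2)/2. -/
/-!
The derivative of `f` at `x` is a positive multiple of `g (y2 - x) - g (x - y1)`, where
`g t = t * exp (-t ^ 2 / L ^ 2)`. On `[y1, x*]` we have `0 ≤ a := x - y1 ≤ b := y2 - x` and
`a + b = y2 - y1`, so it suffices that `g a ≤ g b` whenever `0 ≤ a ≤ b` and `(a + b) ^ 2 ≤ 2 L ^ 2`.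
Taking logarithms, this is `(b ^ 2 - a ^ 2) / L ^ 2 ≤ log b - log a`; the left side is at most
`2 (b - a) / (a + b)`, and the right side is `log (1 + u) - log (1 - u) ≥ 2 u` for
`u = (b - a) / (a + b)`. The second half is symmetric.
-/

open Real Set

theorem two_mul_le_log_one_add_sub_log_one_sub {u : ℝ} (h0 : 0 ≤ u) (h1 : u < 1) :
    2 * u ≤ log (1 + u) - log (1 - u) := by
  have hsum := hasSum_log_sub_log_of_abs_lt_one (abs_lt.2 ⟨by linarith, h1⟩)
  simpa using le_hasSum hsum 0 fun k _ => by positivity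

theorem mul_exp_neg_sq_div_le_of_sq_add_le {L a b : ℝ} (ha : 0 ≤ a) (hab : a ≤ b)
    (hsq : (a + b) ^ 2 ≤ 2 * L ^ 2) :
    a * exp (-a ^ 2 / L ^ 2) ≤ b * exp (-b ^ 2 / L ^ 2) := by
  rcases ha.eq_or_lt with rfl | ha
  · rw [zero_mul]
    exact mul_nonneg hab (exp_nonneg _)
  have hb : 0 < b := ha.trans_le hab
  have hs : 0 < a + b := by linarith
  have hL2 : 0 < L ^ 2 := by nlinarith
  have hlog : 2 * (b - a) / (a + b) ≤ log b - log a := by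
    have hu := two_mul_le_log_one_add_sub_log_one_sub (u := (b - a) / (a + b))
      (div_nonneg (by linarith) hs.le) ((div_lt_one hs).2 (by linarith))
    have h1 : 1 + (b - a) / (a + b) = b / ((a + b) / 2) := by field_simp; ring
    have h2 : 1 - (b - a) / (a + b) = a / ((a + b) / 2) := by field_simp; ring
    rw [h1, h2, log_div hb.ne' (by positivity), log_div ha.ne' (by positivity)] at hu
    calc 2 * (b - a) / (a + b) = 2 * ((b - a) / (a + b)) := by ring
      _ ≤ log b - log a := by linarith
  have hquad : (b ^ 2 - a ^ 2) / L ^ 2 ≤ 2 * (b - a) / (a + b) := by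
    rw [div_le_div_iff₀ hL2 hs]
    nlinarith [mul_le_mul_of_nonneg_left hsq (sub_nonneg.2 hab)]
  have hexp : log a - a ^ 2 / L ^ 2 ≤ log b - b ^ 2 / L ^ 2 := by
    rw [sub_div] at hquad
    linarith
  calc a * exp (-a ^ 2 / L ^ 2) = exp (log a - a ^ 2 / L ^ 2) := by
        rw [sub_eq_add_neg, exp_add, exp_log ha, neg_div]
    _ ≤ exp (log b - b ^ 2 / L ^ 2) := exp_le_exp.2 hexp
    _ = b * exp (-b ^ 2 / L ^ 2) := by
        rw [sub_eq_add_neg, exp_add, exp_log hb, neg_div]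

theorem hasDerivAt_const_mul_exp_neg_sq_add (c y1 y2 L x : ℝ) :
    HasDerivAt (fun x => c * (exp (-(x - y1) ^ 2 / L ^ 2) + exp (-(x - y2) ^ 2 / L ^ 2)))
      (c * (2 / L ^ 2) *
        ((y2 - x) * exp (-(y2 - x) ^ 2 / L ^ 2) - (x - y1) * exp (-(x - y1) ^ 2 / L ^ 2))) x := by
  have hgauss (y : ℝ) : HasDerivAt (fun x : ℝ => -(x - y) ^ 2 / L ^ 2)
      (-(2 * (x - y) ^ 1 * 1) / L ^ 2) x :=
    (((hasDerivAt_id x).sub_const y).pow 2).neg.div_const (L ^ 2)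
  refine ((((hgauss y1).exp).add (hgauss y2).exp).const_mul c).congr_deriv ?_
  rw [← neg_sub y2 x, neg_sq]
  ring

theorem monotone_on_halves_of_close_general
    (y1 y2 L σ0 σ : ℝ)
    (f : ℝ → ℝ)
    (hf : ∀ x, f x = (σ0 ^ 4 / (σ0 ^ 2 + σ ^ 2)) *
      (Real.exp (-(x - y1) ^ 2 / L ^ 2) + Real.exp (-(x - y2) ^ 2 / L ^ 2)))
    (hdist : y2 - y1 ≤ Real.sqrt 2 * L) :
    MonotoneOn f (Set.Icc y1 ((y1 + y2) / 2)) ∧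
    AntitoneOn f (Set.Icc ((y1 + y2) / 2) y2) := by
  set c := σ0 ^ 4 / (σ0 ^ 2 + σ ^ 2)
  have hc : 0 ≤ c * (2 / L ^ 2) := by positivity
  have hf' (x : ℝ) := funext hf ▸ hasDerivAt_const_mul_exp_neg_sq_add c y1 y2 L x
  have hdiff : Differentiable ℝ f := fun x => (hf' x).differentiableAt
  have key {a b : ℝ} (ha : 0 ≤ a) (hab : a ≤ b) (hsum : a + b = y2 - y1) :
      a * exp (-a ^ 2 / L ^ 2) ≤ b * exp (-b ^ 2 / L ^ 2) := by
    refine mul_exp_neg_sq_div_le_of_sq_add_le ha hab ?_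
    calc (a + b) ^ 2 ≤ (√2 * L) ^ 2 := pow_le_pow_left₀ (by linarith) (hsum ▸ hdist) 2
      _ = 2 * L ^ 2 := by rw [mul_pow, sq_sqrt zero_le_two]
  constructor
  · refine monotoneOn_of_deriv_nonneg (convex_Icc _ _) hdiff.continuous.continuousOn
      hdiff.differentiableOn fun x hx => ?_
    rw [interior_Icc] at hx
    rw [(hf' x).deriv]
    exact mul_nonneg hc (sub_nonneg.2 (key (by linarith [hx.1]) (by linarith [hx.2]) (by ring)))
  · refine antitoneOn_of_deriv_nonpos (convex_Icc _ _) hdiff.continuous.continuousOn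
      hdiff.differentiableOn fun x hx => ?_
    rw [interior_Icc] at hx
    rw [(hf' x).deriv]
    exact mul_nonpos_of_nonneg_of_nonpos hc
      (sub_nonpos.2 (key (by linarith [hx.2]) (by linarith [hx.1]) (by ring)))

/-- If `y2 - y1 ≤ √2 · L`, the variance-reduction objective `f` is monotone
nondecreasing on `[y1, x*]` and monotone nonincreasing on `[x*, y2]`, where
`x* = (y1 + y2)/2`. -/
theorem monotone_on_halves_of_close
    (y1 y2 L σ0 σ : ℝ) (hy : y1 < y2) (hL : 0 < L) (hσ0 : 0 < σ0) (hσ : 0 < σ)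
    (f : ℝ → ℝ)
    (hf : ∀ x, f x = (σ0 ^ 4 / (σ0 ^ 2 + σ ^ 2)) *
      (Real.exp (-(x - y1) ^ 2 / L ^ 2) + Real.exp (-(x - y2) ^ 2 / L ^ 2)))
    (hdist : y2 - y1 ≤ Real.sqrt 2 * L) :
    MonotoneOn f (Set.Icc y1 ((y1 + y2) / 2)) ∧
    AntitoneOn f (Set.Icc ((y1 + y2) / 2) y2) :=
  monotone_on_halves_of_close_general y1 y2 L σ0 σ f hf hdist
end

section
/- Suppose y2 − y1 > √2·L. Then placing the measurement at the prediction location y1 is an approximate maximizer with guarantee 1/(1 + e^{−1/2}) ≈ 0.62: for every x ∈ ℝ, f(x) ≤ (1 + exp(−1/2))·f(y1). In particular, f(y1) ≥ f(x*)/(1 + exp(−1/2)) ≥ 0.62·f(x*) for any global maximizer x* of f. -/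
/-- If `y2 - y1 > √2 · L`, then measuring at the prediction location `y1` is an
approximate maximizer with guarantee `1/(1 + e^{-1/2}) ≈ 0.62`: every `x`
satisfies `f x ≤ (1 + exp(-1/2)) · f y1`, and hence for any global maximizer
`x*` one has `f y1 ≥ f x* / (1 + exp(-1/2)) ≥ 0.62 · f x*`. -/
theorem prediction_location_approx_max_of_far
    (y1 y2 L σ0 σ : ℝ) (hy : y1 < y2) (hL : 0 < L) (hσ0 : 0 < σ0) (hσ : 0 < σ)
    (f : ℝ → ℝ)
    (hf : ∀ x, f x = (σ0 ^ 4 / (σ0 ^ 2 + σ ^ 2)) *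
      (Real.exp (-(x - y1) ^ 2 / L ^ 2) + Real.exp (-(x - y2) ^ 2 / L ^ 2)))
    (hdist : y2 - y1 > Real.sqrt 2 * L) :
    (∀ x : ℝ, f x ≤ (1 + Real.exp (-1 / 2)) * f y1) ∧
    (∀ z : ℝ, (∀ x : ℝ, f x ≤ f z) →
      f z / (1 + Real.exp (-1 / 2)) ≤ f y1 ∧ 0.62 * f z ≤ f y1) := by
  have hL2 : (0:ℝ) < L ^ 2 := by positivity
  have hC : 0 < σ0 ^ 4 / (σ0 ^ 2 + σ ^ 2) := by positivity
  have hd2 : (y2 - y1) ^ 2 > 2 * L ^ 2 := by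
    have h2 : Real.sqrt 2 * L > 0 := by positivity
    have : (Real.sqrt 2 * L) ^ 2 = 2 * L ^ 2 := by
      rw [mul_pow, Real.sq_sqrt (by norm_num : (2:ℝ) ≥ 0)]
    nlinarith [hdist, h2]
  have hE : 0 < 1 + Real.exp (-1 / 2) := by positivity
  -- key pointwise bound
  have hsum : ∀ x : ℝ, Real.exp (-(x - y1) ^ 2 / L ^ 2) + Real.exp (-(x - y2) ^ 2 / L ^ 2)
      ≤ 1 + Real.exp (-1 / 2) := by
    intro x
    rcases le_total x ((y1 + y2) / 2) with hx | hx
    · have h1 : Real.exp (-(x - y1) ^ 2 / L ^ 2) ≤ 1 := by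
        rw [show (1:ℝ) = Real.exp 0 by simp]
        apply Real.exp_le_exp.2
        have : (0:ℝ) ≤ (x - y1) ^ 2 / L ^ 2 := by positivity
        rw [neg_div]; linarith
      have hsq : (x - y2) ^ 2 ≥ (y2 - y1) ^ 2 / 4 := by nlinarith
      have h2 : Real.exp (-(x - y2) ^ 2 / L ^ 2) ≤ Real.exp (-1 / 2) := by
        apply Real.exp_le_exp.2
        rw [div_le_div_iff₀ hL2 (by norm_num : (0:ℝ) < 2)]
        nlinarith
      linarith
    · have h2 : Real.exp (-(x - y2) ^ 2 / L ^ 2) ≤ 1 := by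
        rw [show (1:ℝ) = Real.exp 0 by simp]
        apply Real.exp_le_exp.2
        have : (0:ℝ) ≤ (x - y2) ^ 2 / L ^ 2 := by positivity
        rw [neg_div]; linarith
      have hsq : (x - y1) ^ 2 ≥ (y2 - y1) ^ 2 / 4 := by nlinarith
      have h1 : Real.exp (-(x - y1) ^ 2 / L ^ 2) ≤ Real.exp (-1 / 2) := by
        apply Real.exp_le_exp.2
        rw [div_le_div_iff₀ hL2 (by norm_num : (0:ℝ) < 2)]
        nlinarith
      linarith
  have hfy1 : f y1 ≥ σ0 ^ 4 / (σ0 ^ 2 + σ ^ 2) := by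
    rw [hf y1]
    have h1 : Real.exp (-(y1 - y1) ^ 2 / L ^ 2) = 1 := by simp
    have h2 : (0:ℝ) < Real.exp (-(y1 - y2) ^ 2 / L ^ 2) := Real.exp_pos _
    nlinarith
  have hfy1pos : 0 < f y1 := lt_of_lt_of_le hC hfy1
  have hmain : ∀ x : ℝ, f x ≤ (1 + Real.exp (-1 / 2)) * f y1 := by
    intro x
    rw [hf x]
    calc σ0 ^ 4 / (σ0 ^ 2 + σ ^ 2) *
        (Real.exp (-(x - y1) ^ 2 / L ^ 2) + Real.exp (-(x - y2) ^ 2 / L ^ 2))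
        ≤ σ0 ^ 4 / (σ0 ^ 2 + σ ^ 2) * (1 + Real.exp (-1 / 2)) := by
          exact mul_le_mul_of_nonneg_left (hsum x) hC.le
      _ ≤ (1 + Real.exp (-1 / 2)) * f y1 := by nlinarith
  refine ⟨hmain, fun z _ => ?_⟩
  have hz := hmain z
  constructor
  · rw [div_le_iff₀ hE]; linarith [hz]
  · -- need 0.62 * (1 + exp(-1/2)) ≤ 1
    have hexp : Real.exp (-1 / 2) < 0.6129 := by
      have h1 : Real.exp 1 > 2.7182818283 := Real.exp_one_gt_d9
      have h2 : Real.exp (1 / 2) * Real.exp (1 / 2) = Real.exp 1 := by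
        rw [← Real.exp_add]; norm_num
      have h3 : Real.exp (1 / 2) > 1.6316 := by nlinarith [Real.exp_pos (1/2 : ℝ)]
      have h4 : Real.exp (-1 / 2) * Real.exp (1 / 2) = 1 := by
        rw [← Real.exp_add]; norm_num
      nlinarith [Real.exp_pos (-1/2 : ℝ)]
    nlinarith [hz, hfy1pos, Real.exp_pos (-1/2 : ℝ)]
end

section
/- Suppose y2 − y1 ≥ √2·L. Then for every x ∈ ℝ, exp(−(x − y1)²/L²) + exp(−(x − y2)²/L²) ≤ 1 + exp(−1/2). -/
/-- If `y2 - y1 ≥ √2 · L`, then for every `x`,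
`exp(-(x - y1)²/L²) + exp(-(x - y2)²/L²) ≤ 1 + exp(-1/2)`. -/
theorem sum_exp_le_of_far
    (y1 y2 L : ℝ) (hy : y1 < y2) (hL : 0 < L)
    (hdist : y2 - y1 ≥ Real.sqrt 2 * L) :
    ∀ x : ℝ, Real.exp (-(x - y1) ^ 2 / L ^ 2) + Real.exp (-(x - y2) ^ 2 / L ^ 2) ≤
      1 + Real.exp (-1 / 2) := by
  intro x
  have hL2 : (0:ℝ) < L ^ 2 := by positivity
  have hsq : (y2 - y1) ^ 2 ≥ 2 * L ^ 2 := by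
    have h2 : (Real.sqrt 2 * L) ^ 2 = 2 * L ^ 2 := by
      rw [mul_pow, Real.sq_sqrt (by norm_num : (2:ℝ) ≥ 0)]
    calc (y2 - y1) ^ 2 ≥ (Real.sqrt 2 * L) ^ 2 := by
          apply pow_le_pow_left₀ (by positivity) hdist
      _ = 2 * L ^ 2 := h2
  have hsum : (x - y1) ^ 2 + (x - y2) ^ 2 ≥ L ^ 2 := by nlinarith [sq_nonneg (2*x - y1 - y2)]
  rcases le_or_gt (L ^ 2 / 2) ((x - y1) ^ 2) with h | h
  · have h1 : Real.exp (-(x - y1) ^ 2 / L ^ 2) ≤ Real.exp (-1 / 2) := by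
      apply Real.exp_le_exp.mpr
      rw [div_le_div_iff₀ hL2 (by norm_num)]
      nlinarith
    have h2 : Real.exp (-(x - y2) ^ 2 / L ^ 2) ≤ 1 := by
      apply Real.exp_le_one_iff.mpr
      apply div_nonpos_of_nonpos_of_nonneg (neg_nonpos.mpr (sq_nonneg _)) hL2.le
    linarith
  · have h1 : Real.exp (-(x - y2) ^ 2 / L ^ 2) ≤ Real.exp (-1 / 2) := by
      apply Real.exp_le_exp.mpr
      rw [div_le_div_iff₀ hL2 (by norm_num)]
      nlinarith
    have h2 : Real.exp (-(x - y1) ^ 2 / L ^ 2) ≤ 1 := by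
      apply Real.exp_le_one_iff.mpr
      apply div_nonpos_of_nonpos_of_nonneg (neg_nonpos.mpr (sq_nonneg _)) hL2.le
    linarith
end

section
/- Let C be a symmetric invertible k × k real matrix, let b_x, b_y ∈ ℝ^k be vectors, and let c_xx, c_xy ∈ ℝ be scalars. Define the Schur complement t := c_xx − b_xᵀ C⁻¹ b_x and assume t ≠ 0. Let C' be the (k+1) × (k+1) bordered matrix with top-left block C, top-right column b_x, bottom-left row b_xᵀ, and bottom-right entry c_xx, and let b' ∈ ℝ^{k+1} be the vector obtained by appending c_xy to b_y. Then C' is invertible and b'ᵀ (C')⁻¹ b' − b_yᵀ C⁻¹ b_y = t⁻¹·(b_xᵀ C⁻¹ b_y − c_xy)². (This is the marginal-gain formula for the variance-reduction objective: f(A ∪ {x}) − f(A) = T_x · Σ_{y ∈ Ω} (R_{x,y}(A) − φ_SE(x − y))², with T_x = t⁻¹ and R_{x,y}(A) = b_xᵀ C⁻¹ b_y.) -/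
/-!
Invert the bordered matrix blockwise through the Schur complement of its top-left block: for
`M = fromBlocks A B C D`, the bilinear form of `M⁻¹` is that of `A⁻¹` plus a correction term
through `(D - C A⁻¹ B)⁻¹`. When the border has width one, this Schur complement is the scalar `t`,
and symmetry of the top-left block makes the two linear factors of the correction equal, which
produces the square.
-/

open Matrix

namespace Matrix

section Block

variable {m n α : Type*} [Fintype m] [Fintype n] [DecidableEq m] [DecidableEq n] [CommRing α]

theorem dotProduct_inv_fromBlocks_mulVec (A : Matrix m m α) (B : Matrix m n α) (C : Matrix n m α)
    (D : Matrix n n α) (hA : IsUnit A) (hS : IsUnit (D - C * A⁻¹ * B))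
    (u₁ u₂ : m → α) (v₁ v₂ : n → α) :
    Sum.elim u₁ v₁ ⬝ᵥ (fromBlocks A B C D)⁻¹ *ᵥ Sum.elim u₂ v₂ =
      u₁ ⬝ᵥ A⁻¹ *ᵥ u₂ +
        (u₁ ᵥ* A⁻¹ ᵥ* B - v₁) ⬝ᵥ (D - C * A⁻¹ * B)⁻¹ *ᵥ (C *ᵥ A⁻¹ *ᵥ u₂ - v₂) := by
  let := hA.invertible
  rw [← invOf_eq_nonsing_inv] at hS
  let := hS.invertible
  let := fromBlocks₁₁Invertible A B C D
  simp only [← invOf_eq_nonsing_inv]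
  rw [invOf_fromBlocks₁₁_eq]
  simp only [fromBlocks_mulVec, sumElim_dotProduct_sumElim, add_mulVec, neg_mulVec,
    ← mulVec_mulVec, dotProduct_add, dotProduct_neg, dotProduct_sub, sub_dotProduct, mulVec_sub,
    Sum.elim_comp_inl, Sum.elim_comp_inr]
  simp only [dotProduct_mulVec, vecMul_vecMul]
  abel

end Block

theorem sub_replicateRow_mul_mul_replicateCol_apply {m n α : Type*} [Fintype m] [CommRing α]
    (D : Matrix n n α) (A : Matrix m m α) (b c : m → α) (i j : n) :
    (D - replicateRow n c * A * replicateCol n b) i j = D i j - c ⬝ᵥ A *ᵥ b := by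
  rw [Matrix.mul_assoc, ← replicateCol_mulVec, replicateRow_mul_replicateCol]
  rfl

section Unique

variable {m n α K : Type*} [Fintype m] [Fintype n] [DecidableEq m] [DecidableEq n] [Unique n]

theorem isUnit_iff_isUnit_apply_default [CommRing α] (M : Matrix n n α) :
    IsUnit M ↔ IsUnit (M default default) := by
  rw [isUnit_iff_isUnit_det, det_unique]

theorem dotProduct_inv_mulVec_of_unique [Field K] (M : Matrix n n K) (x y : n → K) :
    x ⬝ᵥ M⁻¹ *ᵥ y = (M default default)⁻¹ * (x default * y default) := by
  simp only [dotProduct, Finset.univ_unique, Finset.sum_singleton, inv_subsingleton,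
    mulVec_diagonal, Ring.inverse_eq_inv']
  ring

theorem isUnit_fromBlocks_replicateCol_replicateRow [CommRing α] {A : Matrix m m α}
    (hA : IsUnit A) {b c : m → α} {D : Matrix n n α}
    (hS : IsUnit (D default default - c ⬝ᵥ A⁻¹ *ᵥ b)) :
    IsUnit (fromBlocks A (replicateCol n b) (replicateRow n c) D) := by
  let := hA.invertible
  rwa [isUnit_fromBlocks_iff_of_invertible₁₁, invOf_eq_nonsing_inv,
    isUnit_iff_isUnit_apply_default, sub_replicateRow_mul_mul_replicateCol_apply]

theorem dotProduct_inv_fromBlocks_replicateCol_replicateRow_mulVec [Field K] {A : Matrix m m K}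
    (hA : IsUnit A) {b c : m → K} {D : Matrix n n K} (hS : D default default - c ⬝ᵥ A⁻¹ *ᵥ b ≠ 0)
    (u₁ u₂ : m → K) (e₁ e₂ : K) :
    Sum.elim u₁ (fun _ : n => e₁) ⬝ᵥ
        (fromBlocks A (replicateCol n b) (replicateRow n c) D)⁻¹ *ᵥ Sum.elim u₂ (fun _ => e₂) =
      u₁ ⬝ᵥ A⁻¹ *ᵥ u₂ +
        (D default default - c ⬝ᵥ A⁻¹ *ᵥ b)⁻¹ *
          ((u₁ ⬝ᵥ A⁻¹ *ᵥ b - e₁) * (c ⬝ᵥ A⁻¹ *ᵥ u₂ - e₂)) := by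
  rw [← sub_replicateRow_mul_mul_replicateCol_apply, ← isUnit_iff_ne_zero,
    ← isUnit_iff_isUnit_apply_default] at hS
  rw [dotProduct_inv_fromBlocks_mulVec _ _ _ _ hA hS, dotProduct_inv_mulVec_of_unique (D - _),
    sub_replicateRow_mul_mul_replicateCol_apply, mulVec_replicateCol_eq_const,
    replicateRow_mulVec_eq_const]
  simp only [Pi.sub_apply, Function.const_apply, dotProduct_mulVec]

end Unique

theorem IsSymm.dotProduct_mulVec_comm {n α : Type*} [Fintype n] [CommSemiring α]
    {M : Matrix n n α} (hM : M.IsSymm) (x y : n → α) : x ⬝ᵥ M *ᵥ y = y ⬝ᵥ M *ᵥ x := by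
  rw [dotProduct_mulVec, ← mulVec_transpose, hM.eq, dotProduct_comm]

end Matrix

/-- Bordered-matrix (Schur complement) identity underlying the marginal-gain
formula for the variance-reduction objective: bordering a symmetric invertible
matrix `C` by the column `b_x` and corner entry `c_xx` with nonzero Schur
complement `t = c_xx - b_xᵀ C⁻¹ b_x` yields an invertible matrix `C'`, and for
`b'` obtained by appending `c_xy` to `b_y`,
`b'ᵀ (C')⁻¹ b' - b_yᵀ C⁻¹ b_y = t⁻¹ (b_xᵀ C⁻¹ b_y - c_xy)²`. -/
theorem bordered_quadratic_form_diff
    (k : ℕ) (C : Matrix (Fin k) (Fin k) ℝ) (hCsymm : C.IsSymm) (hCinv : IsUnit C)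
    (bx by' : Fin k → ℝ) (cxx cxy : ℝ)
    (t : ℝ) (ht : t = cxx - bx ⬝ᵥ C⁻¹.mulVec bx) (ht0 : t ≠ 0)
    (C' : Matrix (Fin k ⊕ Fin 1) (Fin k ⊕ Fin 1) ℝ)
    (hC' : C' = Matrix.fromBlocks C (Matrix.replicateCol (Fin 1) bx) (Matrix.replicateRow (Fin 1) bx)
      (fun _ _ => cxx))
    (b' : Fin k ⊕ Fin 1 → ℝ) (hb' : b' = Sum.elim by' (fun _ => cxy)) :
    IsUnit C' ∧
    b' ⬝ᵥ (C')⁻¹.mulVec b' - by' ⬝ᵥ C⁻¹.mulVec by' =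
      t⁻¹ * (bx ⬝ᵥ C⁻¹.mulVec by' - cxy) ^ 2 := by
  subst hC' hb'
  -- `rw` only matches the corner once it is typed as a `Matrix` rather than a bare function
  set D : Matrix (Fin 1) (Fin 1) ℝ := fun _ _ => cxx
  have hschur : D default default - bx ⬝ᵥ C⁻¹ *ᵥ bx = t := ht.symm
  refine ⟨isUnit_fromBlocks_replicateCol_replicateRow hCinv (hschur ▸ ht0.isUnit), ?_⟩
  rw [dotProduct_inv_fromBlocks_replicateCol_replicateRow_mulVec hCinv (hschur ▸ ht0), hschur,
    hCsymm.inv.dotProduct_mulVec_comm by' bx]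
  ring
end

section
/- The variance-reduction objective is not submodular. Concretely, let k(u, v) := exp(−(u − v)²/2) (the squared-exponential covariance with σ0 = 1, L = 1) and, for a tuple of measurement locations p = (p1, …, pn) ∈ ℝⁿ, define F(p) := bᵀ C⁻¹ b, where b ∈ ℝⁿ has entries b_i = k(p_i, 0) and C is the n × n matrix with entries C_{ij} = k(p_i, p_j) + δ_{ij} (noise variance σ² = 1, single prediction location at 0). Then with a = 0.6784, c = 1.4869, and x = 0.6892, the diminishing-returns inequality fails: F(a, x) − F(a) < F(a, c, x) − F(a, c). -/
open Matrix

/-- The variance reduction `F p = bᵀ C⁻¹ b` at the single prediction location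
`0` from measurements at the points `p 0, …, p (n-1)`, with squared-exponential
covariance `k(u,v) = exp(-(u-v)²/2)` (σ0 = 1, L = 1) and noise variance 1. -/
noncomputable def varianceReduction {n : ℕ} (p : Fin n → ℝ) : ℝ :=
  let k : ℝ → ℝ → ℝ := fun u v => Real.exp (-(u - v) ^ 2 / 2)
  let b : Fin n → ℝ := fun i => k (p i) 0
  let C : Matrix (Fin n) (Fin n) ℝ :=
    fun i j => k (p i) (p j) + if i = j then 1 else 0
  b ⬝ᵥ C⁻¹.mulVec b


private lemma sq_bounds {x l u : ℝ} (h1 : l ≤ x) (h2 : x ≤ u) (h0 : (0:ℝ) ≤ l) :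
    l^2 ≤ x^2 ∧ x^2 ≤ u^2 := by constructor <;> nlinarith

private lemma mul_bounds {x y lx ux ly uy : ℝ} (h0x : (0:ℝ) ≤ lx) (h0y : (0:ℝ) ≤ ly)
    (h1 : lx ≤ x) (h2 : x ≤ ux) (h3 : ly ≤ y) (h4 : y ≤ uy) :
    lx*ly ≤ x*y ∧ x*y ≤ ux*uy := by constructor <;> nlinarith

private lemma exp_bounds7neg {x l u : ℝ} (hx0 : x ≤ 0) (hx1 : -1 ≤ x)
    (hl : l ≤ 1 + x + x^2/2 + x^3/6 + x^4/24 + x^5/120 + x^6/720 + x^7/4410)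
    (hu : 1 + x + x^2/2 + x^3/6 + x^4/24 + x^5/120 + x^6/720 - x^7/4410 ≤ u) :
    l ≤ Real.exp x ∧ Real.exp x ≤ u := by
  have hx : |x| ≤ 1 := by rw [abs_le]; constructor <;> linarith
  have h := Real.exp_bound hx (by norm_num : 0 < 7)
  rw [abs_le] at h
  have habs : |x| = -x := abs_of_nonpos hx0
  rw [habs] at h
  simp [Finset.sum_range_succ] at h
  norm_num [Nat.factorial] at h
  constructor <;> nlinarith [h.1, h.2]

private lemma vr_one (p : Fin 1 → ℝ) :
    varianceReduction p = Real.exp (-(p 0 - 0)^2/2)^2 / 2 := by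
  simp only [varianceReduction]
  have hC : (fun i j => Real.exp (-(p i - p j) ^ 2 / 2) + if i = j then (1:ℝ) else 0 :
      Matrix (Fin 1) (Fin 1) ℝ) = !![2] := by
    ext i j
    fin_cases i <;> fin_cases j <;> simp [Real.exp_zero] <;> norm_num
  rw [hC]
  have : (!![2] : Matrix (Fin 1) (Fin 1) ℝ)⁻¹ = !![1/2] := by
    refine Matrix.inv_eq_right_inv ?_
    ext i j; fin_cases i <;> fin_cases j <;> simp [Matrix.mul_apply] <;> norm_num
  rw [this]
  simp [Matrix.mulVec, dotProduct, Fin.sum_univ_one]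
  ring_nf

private lemma vr_two (p : Fin 2 → ℝ) :
    varianceReduction p =
      (2 * Real.exp (-(p 0 - 0)^2/2)^2
        - 2 * Real.exp (-(p 0 - p 1)^2/2) * Real.exp (-(p 0 - 0)^2/2) * Real.exp (-(p 1 - 0)^2/2)
        + 2 * Real.exp (-(p 1 - 0)^2/2)^2) / (4 - Real.exp (-(p 0 - p 1)^2/2)^2) := by
  simp only [varianceReduction]
  set k := Real.exp (-(p 0 - p 1)^2/2) with hk
  have hkpos : 0 < k := Real.exp_pos _
  have hkle : k ≤ 1 := by
    rw [hk]; apply Real.exp_le_one_iff.mpr; nlinarith [sq_nonneg (p 0 - p 1)]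
  have hd : 4 - k^2 > 0 := by nlinarith
  have hd' : 4 - k^2 ≠ 0 := ne_of_gt hd
  have hC : (fun i j => Real.exp (-(p i - p j) ^ 2 / 2) + if i = j then (1:ℝ) else 0 :
      Matrix (Fin 2) (Fin 2) ℝ) = !![2, k; k, 2] := by
    have hsym : -(p 1 - p 0)^2/2 = -(p 0 - p 1)^2/2 := by ring
    ext i j
    fin_cases i <;> fin_cases j <;> simp [Real.exp_zero, hsym, hk] <;> norm_num
  rw [hC]
  have hinv : (!![2, k; k, 2] : Matrix (Fin 2) (Fin 2) ℝ)⁻¹ =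
      !![2/(4-k^2), -k/(4-k^2); -k/(4-k^2), 2/(4-k^2)] := by
    refine Matrix.inv_eq_right_inv ?_
    ext i j
    fin_cases i <;> fin_cases j <;>
      simp [Matrix.mul_apply, Fin.sum_univ_two] <;> field_simp <;> ring
  rw [hinv]
  simp [Matrix.mulVec, dotProduct, Fin.sum_univ_two]
  field_simp
  ring

set_option maxHeartbeats 2000000 in
private lemma vr_three (p : Fin 3 → ℝ) :
    varianceReduction p =
      (Real.exp (-(p 0 - 0)^2/2)^2 * (4 - Real.exp (-(p 1 - p 2)^2/2)^2)
        + Real.exp (-(p 1 - 0)^2/2)^2 * (4 - Real.exp (-(p 0 - p 2)^2/2)^2)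
        + Real.exp (-(p 2 - 0)^2/2)^2 * (4 - Real.exp (-(p 0 - p 1)^2/2)^2)
        + 2 * Real.exp (-(p 0 - 0)^2/2) * Real.exp (-(p 1 - 0)^2/2) *
            (Real.exp (-(p 0 - p 2)^2/2) * Real.exp (-(p 1 - p 2)^2/2)
              - 2 * Real.exp (-(p 0 - p 1)^2/2))
        + 2 * Real.exp (-(p 0 - 0)^2/2) * Real.exp (-(p 2 - 0)^2/2) *
            (Real.exp (-(p 0 - p 1)^2/2) * Real.exp (-(p 1 - p 2)^2/2)
              - 2 * Real.exp (-(p 0 - p 2)^2/2))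
        + 2 * Real.exp (-(p 1 - 0)^2/2) * Real.exp (-(p 2 - 0)^2/2) *
            (Real.exp (-(p 0 - p 1)^2/2) * Real.exp (-(p 0 - p 2)^2/2)
              - 2 * Real.exp (-(p 1 - p 2)^2/2))) /
      (8 - 2 * Real.exp (-(p 0 - p 1)^2/2)^2 - 2 * Real.exp (-(p 0 - p 2)^2/2)^2
        - 2 * Real.exp (-(p 1 - p 2)^2/2)^2
        + 2 * Real.exp (-(p 0 - p 1)^2/2) * Real.exp (-(p 0 - p 2)^2/2) *
            Real.exp (-(p 1 - p 2)^2/2)) := by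
  simp only [varianceReduction]
  set a := Real.exp (-(p 0 - p 1)^2/2) with ha
  set b := Real.exp (-(p 0 - p 2)^2/2) with hb
  set c := Real.exp (-(p 1 - p 2)^2/2) with hc
  have hapos : 0 < a := Real.exp_pos _
  have hbpos : 0 < b := Real.exp_pos _
  have hcpos : 0 < c := Real.exp_pos _
  have hale : a ≤ 1 := by
    rw [ha]; apply Real.exp_le_one_iff.mpr; nlinarith [sq_nonneg (p 0 - p 1)]
  have hble : b ≤ 1 := by
    rw [hb]; apply Real.exp_le_one_iff.mpr; nlinarith [sq_nonneg (p 0 - p 2)]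
  have hcle : c ≤ 1 := by
    rw [hc]; apply Real.exp_le_one_iff.mpr; nlinarith [sq_nonneg (p 1 - p 2)]
  have ha2 : a^2 ≤ 1 := by nlinarith
  have hb2 : b^2 ≤ 1 := by nlinarith
  have hc2 : c^2 ≤ 1 := by nlinarith
  have hd : 0 < 8 - 2*a^2 - 2*b^2 - 2*c^2 + 2*a*b*c := by
    nlinarith [mul_pos (mul_pos hapos hbpos) hcpos]
  have hd' : 8 - 2*a^2 - 2*b^2 - 2*c^2 + 2*a*b*c ≠ 0 := ne_of_gt hd
  have hC : (fun i j => Real.exp (-(p i - p j) ^ 2 / 2) + if i = j then (1:ℝ) else 0 :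
      Matrix (Fin 3) (Fin 3) ℝ) = !![2, a, b; a, 2, c; b, c, 2] := by
    have h1 : -(p 1 - p 0)^2/2 = -(p 0 - p 1)^2/2 := by ring
    have h2 : -(p 2 - p 0)^2/2 = -(p 0 - p 2)^2/2 := by ring
    have h3 : -(p 2 - p 1)^2/2 = -(p 1 - p 2)^2/2 := by ring
    ext i j
    fin_cases i <;> fin_cases j <;> simp [Real.exp_zero, h1, h2, h3, ha, hb, hc] <;> norm_num
  rw [hC]
  set d := 8 - 2*a^2 - 2*b^2 - 2*c^2 + 2*a*b*c with hdd
  have hinv : (!![2, a, b; a, 2, c; b, c, 2] : Matrix (Fin 3) (Fin 3) ℝ)⁻¹ =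
      !![(4-c^2)/d, (b*c-2*a)/d, (a*c-2*b)/d;
         (b*c-2*a)/d, (4-b^2)/d, (a*b-2*c)/d;
         (a*c-2*b)/d, (a*b-2*c)/d, (4-a^2)/d] := by
    refine Matrix.inv_eq_right_inv ?_
    ext i j
    fin_cases i <;> fin_cases j <;>
      simp [Matrix.mul_apply, Fin.sum_univ_three] <;> field_simp <;> ring
  rw [hinv]
  simp [Matrix.mulVec, dotProduct, Fin.sum_univ_three]
  field_simp
  ring

set_option maxHeartbeats 4000000 in
/-- The variance-reduction objective is not submodular: with `a = 0.6784`,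
`c = 1.4869`, `x = 0.6892`, the diminishing-returns inequality fails. -/
theorem variance_reduction_not_submodular :
    varianceReduction ![(0.6784 : ℝ), 0.6892] - varianceReduction ![(0.6784 : ℝ)] <
      varianceReduction ![(0.6784 : ℝ), 1.4869, 0.6892] -
        varianceReduction ![(0.6784 : ℝ), 1.4869] := by

  rw [vr_one ![0.6784], vr_two ![0.6784, 0.6892], vr_two ![0.6784, 1.4869],
    vr_three ![0.6784, 1.4869, 0.6892]]
  simp only [Matrix.cons_val_zero, Matrix.cons_val_one, Matrix.head_cons,
    Matrix.cons_val_two, Matrix.tail_cons, Matrix.cons_val_fin_one]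
  have E1 : Real.exp (-((0.6784:ℝ) - 0)^2/2) = Real.exp (-0.23011328) := by congr 1; norm_num
  have E2 : Real.exp (-((0.6892:ℝ) - 0)^2/2) = Real.exp (-0.23749832) := by congr 1; norm_num
  have E3 : Real.exp (-((1.4869:ℝ) - 0)^2/2) = Real.exp (-1.105435805) := by congr 1; norm_num
  have E4 : Real.exp (-((0.6784:ℝ) - 0.6892)^2/2) = Real.exp (-0.00005832) := by
    congr 1; norm_num
  have E5 : Real.exp (-((0.6784:ℝ) - 1.4869)^2/2) = Real.exp (-0.326836125) := by
    congr 1; norm_num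
  have E6 : Real.exp (-((1.4869:ℝ) - 0.6892)^2/2) = Real.exp (-0.318162645) := by
    congr 1; norm_num
  rw [E1, E2, E3, E4, E5, E6]
  set ba := Real.exp (-0.23011328 : ℝ) with hba
  set bx := Real.exp (-0.23749832 : ℝ) with hbx
  set bc := Real.exp (-1.105435805 : ℝ) with hbc
  set kax := Real.exp (-0.00005832 : ℝ) with hkax
  set kac := Real.exp (-0.326836125 : ℝ) with hkac
  set kcx := Real.exp (-0.318162645 : ℝ) with hkcx
  obtain ⟨hba_l, hba_u⟩ : (0.794443601:ℝ) ≤ ba ∧ ba ≤ 0.794443618 :=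
    exp_bounds7neg (by norm_num) (by norm_num) (by norm_num) (by norm_num)
  obtain ⟨hbx_l, hbx_u⟩ : (0.788598214:ℝ) ≤ bx ∧ bx ≤ 0.788598234 :=
    exp_bounds7neg (by norm_num) (by norm_num) (by norm_num) (by norm_num)
  obtain ⟨hkax_l, hkax_u⟩ : (0.999941681:ℝ) ≤ kax ∧ kax ≤ 0.999941682 :=
    exp_bounds7neg (by norm_num) (by norm_num) (by norm_num) (by norm_num)
  obtain ⟨hkac_l, hkac_u⟩ : (0.721201905:ℝ) ≤ kac ∧ kac ≤ 0.721202087 :=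
    exp_bounds7neg (by norm_num) (by norm_num) (by norm_num) (by norm_num)
  obtain ⟨hkcx_l, hkcx_u⟩ : (0.727484445:ℝ) ≤ kcx ∧ kcx ≤ 0.727484595 :=
    exp_bounds7neg (by norm_num) (by norm_num) (by norm_num) (by norm_num)
  obtain ⟨hbc_l, hbc_u⟩ : (0.33106657:ℝ) ≤ bc ∧ bc ≤ 0.331066571 := by
    obtain ⟨h1, h2⟩ : (0.899932242:ℝ) ≤ Real.exp (-0.105435805) ∧
        Real.exp (-0.105435805 : ℝ) ≤ 0.899932243 :=
      exp_bounds7neg (by norm_num) (by norm_num) (by norm_num) (by norm_num)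
    have hsplit : bc = Real.exp (-1) * Real.exp (-0.105435805) := by
      rw [hbc, ← Real.exp_add]; norm_num
    have hep : (0:ℝ) < Real.exp 1 := Real.exp_pos 1
    have g1 : (2.7182818283 : ℝ) < Real.exp 1 := Real.exp_one_gt_d9
    have g2 : Real.exp 1 < 2.7182818286 := Real.exp_one_lt_d9
    have hinv : (Real.exp 1)⁻¹ * Real.exp 1 = 1 := inv_mul_cancel₀ (ne_of_gt hep)
    have hyp : (0:ℝ) < (Real.exp 1)⁻¹ := inv_pos.mpr hep
    have hy1 : (0.3678794411 : ℝ) ≤ (Real.exp 1)⁻¹ := by nlinarith only [hinv, hyp, g2, hep]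
    have hy2 : (Real.exp 1)⁻¹ ≤ 0.3678794413 := by nlinarith only [hinv, hyp, g1, hep]
    have hE : (0:ℝ) < Real.exp (-0.105435805 : ℝ) := Real.exp_pos _
    rw [hsplit, Real.exp_neg 1]
    constructor <;> nlinarith only [h1, h2, hy1, hy2, hE, hyp]
  obtain ⟨t0, t1⟩ := sq_bounds hba_l hba_u (by norm_num)
  have h_ba2_l : (0.631140635169:ℝ) ≤ ba^2 := le_trans (by norm_num) t0
  have h_ba2_u : ba^2 ≤ (0.631140662181:ℝ) := le_trans t1 (by norm_num)
  obtain ⟨t2, t3⟩ := sq_bounds hbx_l hbx_u (by norm_num)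
  have h_bx2_l : (0.621887143123:ℝ) ≤ bx^2 := le_trans (by norm_num) t2
  have h_bx2_u : bx^2 ≤ (0.621887174668:ℝ) := le_trans t3 (by norm_num)
  obtain ⟨t4, t5⟩ := sq_bounds hbc_l hbc_u (by norm_num)
  have h_bc2_l : (0.109605073771:ℝ) ≤ bc^2 := le_trans (by norm_num) t4
  have h_bc2_u : bc^2 ≤ (0.109605074434:ℝ) := le_trans t5 (by norm_num)
  obtain ⟨t6, t7⟩ := sq_bounds hkax_l hkax_u (by norm_num)
  have h_kax2_l : (0.999883365401:ℝ) ≤ kax^2 := le_trans (by norm_num) t6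
  have h_kax2_u : kax^2 ≤ (0.999883367401:ℝ) := le_trans t7 (by norm_num)
  obtain ⟨t8, t9⟩ := sq_bounds hkac_l hkac_u (by norm_num)
  have h_kac2_l : (0.520132187775:ℝ) ≤ kac^2 := le_trans (by norm_num) t8
  have h_kac2_u : kac^2 ≤ (0.520132450294:ℝ) := le_trans t9 (by norm_num)
  obtain ⟨t10, t11⟩ := sq_bounds hkcx_l hkcx_u (by norm_num)
  have h_kcx2_l : (0.529233617716:ℝ) ≤ kcx^2 := le_trans (by norm_num) t10
  have h_kcx2_u : kcx^2 ≤ (0.529233835963:ℝ) := le_trans t11 (by norm_num)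
  obtain ⟨t12, t13⟩ := mul_bounds (by norm_num) (by norm_num) hba_l hba_u hbx_l hbx_u
  have h_babx_l : (0.626496804872:ℝ) ≤ ba*bx := le_trans (by norm_num) t12
  have h_babx_u : ba*bx ≤ (0.626496834168:ℝ) := le_trans t13 (by norm_num)
  obtain ⟨t14, t15⟩ := mul_bounds (by norm_num) (by norm_num) hba_l hba_u hbc_l hbc_u
  have h_babc_l : (0.263013718041:ℝ) ≤ ba*bc := le_trans (by norm_num) t14
  have h_babc_u : ba*bc ≤ (0.263013724465:ℝ) := le_trans t15 (by norm_num)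
  obtain ⟨t16, t17⟩ := mul_bounds (by norm_num) (by norm_num) hbc_l hbc_u hbx_l hbx_u
  have h_bcbx_l : (0.261078505817:ℝ) ≤ bc*bx := le_trans (by norm_num) t16
  have h_bcbx_u : bc*bx ≤ (0.261078513228:ℝ) := le_trans t17 (by norm_num)
  obtain ⟨t18, t19⟩ := mul_bounds (by norm_num) (by norm_num) h_babx_l h_babx_u hkax_l hkax_u
  have h_babxkax_l : (0.626460268204:ℝ) ≤ ba*bx*kax := le_trans (by norm_num) t18
  have h_babxkax_u : ba*bx*kax ≤ (0.626460298126:ℝ) := le_trans t19 (by norm_num)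
  obtain ⟨t20, t21⟩ := mul_bounds (by norm_num) (by norm_num) h_babc_l h_babc_u hkac_l hkac_u
  have h_babckac_l : (0.189685994492:ℝ) ≤ ba*bc*kac := le_trans (by norm_num) t20
  have h_babckac_u : ba*bc*kac ≤ (0.189686046994:ℝ) := le_trans t21 (by norm_num)
  obtain ⟨t22, t23⟩ := mul_bounds (by norm_num) (by norm_num) h_ba2_l h_ba2_u h_kcx2_l h_kcx2_u
  have h_ba2kcx2_l : (0.334020841638:ℝ) ≤ ba^2*kcx^2 := le_trans (by norm_num) t22
  have h_ba2kcx2_u : ba^2*kcx^2 ≤ (0.334020993679:ℝ) := le_trans t23 (by norm_num)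
  obtain ⟨t24, t25⟩ := mul_bounds (by norm_num) (by norm_num) h_bc2_l h_bc2_u h_kax2_l h_kax2_u
  have h_bc2kax2_l : (0.109592290027:ℝ) ≤ bc^2*kax^2 := le_trans (by norm_num) t24
  have h_bc2kax2_u : bc^2*kax^2 ≤ (0.10959229091:ℝ) := le_trans t25 (by norm_num)
  obtain ⟨t26, t27⟩ := mul_bounds (by norm_num) (by norm_num) h_bx2_l h_bx2_u h_kac2_l h_kac2_u
  have h_bx2kac2_l : (0.323463520301:ℝ) ≤ bx^2*kac^2 := le_trans (by norm_num) t26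
  have h_bx2kac2_u : bx^2*kac^2 ≤ (0.323463699967:ℝ) := le_trans t27 (by norm_num)
  obtain ⟨t28, t29⟩ := mul_bounds (by norm_num) (by norm_num) h_babc_l h_babc_u hkax_l hkax_u
  have h_babckax_l : (0.262998379343:ℝ) ≤ ba*bc*kax := le_trans (by norm_num) t28
  have h_babckax_u : ba*bc*kax ≤ (0.262998386031:ℝ) := le_trans t29 (by norm_num)
  obtain ⟨t30, t31⟩ := mul_bounds (by norm_num) (by norm_num) h_babckax_l h_babckax_u hkcx_l hkcx_u
  have h_babckaxkcx_l : (0.191327230032:ℝ) ≤ ba*bc*kax*kcx := le_trans (by norm_num) t30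
  have h_babckaxkcx_u : ba*bc*kax*kcx ≤ (0.191327274348:ℝ) := le_trans t31 (by norm_num)
  obtain ⟨t32, t33⟩ := mul_bounds (by norm_num) (by norm_num) h_babx_l h_babx_u hkac_l hkac_u
  have h_babxkac_l : (0.45183068915:ℝ) ≤ ba*bx*kac := le_trans (by norm_num) t32
  have h_babxkac_u : ba*bx*kac ≤ (0.451830824301:ℝ) := le_trans t33 (by norm_num)
  obtain ⟨t34, t35⟩ := mul_bounds (by norm_num) (by norm_num) h_babxkac_l h_babxkac_u hkcx_l hkcx_u
  have h_babxkackcx_l : (0.32869979813:ℝ) ≤ ba*bx*kac*kcx := le_trans (by norm_num) t34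
  have h_babxkackcx_u : ba*bx*kac*kcx ≤ (0.328699964226:ℝ) := le_trans t35 (by norm_num)
  obtain ⟨t36, t37⟩ := mul_bounds (by norm_num) (by norm_num) h_bcbx_l h_bcbx_u hkac_l hkac_u
  have h_bcbxkac_l : (0.188290315749:ℝ) ≤ bc*bx*kac := le_trans (by norm_num) t36
  have h_bcbxkac_u : bc*bx*kac ≤ (0.188290368611:ℝ) := le_trans t37 (by norm_num)
  obtain ⟨t38, t39⟩ := mul_bounds (by norm_num) (by norm_num) h_bcbxkac_l h_bcbxkac_u hkax_l hkax_u
  have h_bcbxkackax_l : (0.188279334846:ℝ) ≤ bc*bx*kac*kax := le_trans (by norm_num) t38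
  have h_bcbxkackax_u : bc*bx*kac*kax ≤ (0.188279387894:ℝ) := le_trans t39 (by norm_num)
  obtain ⟨t40, t41⟩ := mul_bounds (by norm_num) (by norm_num) h_bcbx_l h_bcbx_u hkcx_l hkcx_u
  have h_bcbxkcx_l : (0.189930551905:ℝ) ≤ bc*bx*kcx := le_trans (by norm_num) t40
  have h_bcbxkcx_u : bc*bx*kcx ≤ (0.189930596459:ℝ) := le_trans t41 (by norm_num)
  obtain ⟨t42, t43⟩ := mul_bounds (by norm_num) (by norm_num) hkac_l hkac_u hkcx_l hkcx_u
  have h_kackcx_l : (0.524663167591:ℝ) ≤ kac*kcx := le_trans (by norm_num) t42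
  have h_kackcx_u : kac*kcx ≤ (0.524663408175:ℝ) := le_trans t43 (by norm_num)
  obtain ⟨t44, t45⟩ := mul_bounds (by norm_num) (by norm_num) h_kackcx_l h_kackcx_u hkax_l hkax_u
  have h_kackcxkax_l : (0.524632569759:ℝ) ≤ kac*kcx*kax := le_trans (by norm_num) t44
  have h_kackcxkax_u : kac*kcx*kax ≤ (0.524632810855:ℝ) := le_trans t45 (by norm_num)
  have hD2 : (0:ℝ) < 4 - kax^2 := by linarith only [h_kax2_u]
  have hDac : (0:ℝ) < 4 - kac^2 := by linarith only [h_kac2_u]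
  have hD3 : (0:ℝ) < 8 - 2*kac^2 - 2*kax^2 - 2*kcx^2 + 2*kac*kax*kcx := by
    linarith only [h_kac2_u, h_kax2_u, h_kcx2_u, h_kackcxkax_l]
  have hQ2 : (0.31557031:ℝ) ≤ ba^2/2 := by linarith only [h_ba2_l]
  have hQ1 : (2*ba^2 - 2*kax*ba*bx + 2*bx^2)/(4 - kax^2) ≤ 0.41769548 := by
    rw [div_le_iff₀ hD2]
    linarith only [h_ba2_u, h_bx2_u, h_babxkax_l, h_kax2_u]
  have hQ4 : (2*ba^2 - 2*kac*ba*bc + 2*bc^2)/(4 - kac^2) ≤ 0.31671306 := by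
    rw [div_le_iff₀ hDac]
    linarith only [h_ba2_u, h_bc2_u, h_babckac_l, h_kac2_u]
  have hQ3 : (0.41928033:ℝ) ≤
      (ba^2 * (4 - kcx^2) + bc^2 * (4 - kax^2) + bx^2 * (4 - kac^2)
        + 2*ba*bc*(kax*kcx - 2*kac) + 2*ba*bx*(kac*kcx - 2*kax)
        + 2*bc*bx*(kac*kax - 2*kcx)) /
      (8 - 2*kac^2 - 2*kax^2 - 2*kcx^2 + 2*kac*kax*kcx) := by
    rw [le_div_iff₀ hD3]
    linarith only [h_ba2_l, h_bc2_l, h_bx2_l, h_ba2kcx2_u, h_bc2kax2_u, h_bx2kac2_u,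
      h_babckaxkcx_l, h_babckac_u, h_babxkackcx_l, h_babxkax_u,
      h_bcbxkackax_l, h_bcbxkcx_u, h_kac2_l, h_kax2_l, h_kcx2_l, h_kackcxkax_u]
  linarith only [hQ1, hQ2, hQ3, hQ4]
end
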